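/- The class of rank-two matroids is not strongly pigeonhole. Specifically, for every integer t ≥ 2, if M is the rank-two matroid on 2t elements consisting of t parallel pairs (a rank-two simple matroid with t points, each replaced by a parallel pair of elements) and U is a set containing exactly one element from each parallel pair, then λ_M(U) = 2 and the relation ∼_U has at least t equivalence classes. -/

import Mathlib

/-!
Let `d i` be the partner of `c i` in the `i`-th parallel pair. Elements of different pairs are
distinct and independent, so `U` and its complement, which contains all the `d i`, both have
rank two, whence `λ_M(U) = 2 + 2 - 2`. For `i ≠ j` the singletons `{c i}` and `{c j}` are
separated by `Z = {d i}`: `{c i, d i}` is a parallel pair, while `{c j, d i}` is independent.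
-/

open scoped Classical

/-- A set-system: a finite ground set `E` together with a family `Ind` of subsets of `E`,
called the independent sets. -/
structure SetSystem (α : Type) where
  E : Finset α
  Ind : Set (Finset α)
  ind_subset : ∀ X ∈ Ind, X ⊆ E

namespace SetSystem

variable {α : Type}

/-- The relation `X ∼_U X'`: for every `Z ⊆ E − U`, `X ∪ Z` is independent iff `X' ∪ Z` is. -/
def Eqv (S : SetSystem α) (U : Finset α) (X X' : Finset α) : Prop :=
  ∀ Z : Finset α, Z ⊆ S.E \ U → ((X ∪ Z) ∈ S.Ind ↔ (X' ∪ Z) ∈ S.Ind)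

/-- `∼_U` as a setoid on the subsets of `U`. -/
def eqvSetoid (S : SetSystem α) (U : Finset α) : Setoid {X : Finset α // X ⊆ U} where
  r X X' := S.Eqv U X.1 X'.1
  iseqv := ⟨fun _ _ _ => Iff.rfl, fun h Z hZ => (h Z hZ).symm,
    fun h h' Z hZ => (h Z hZ).trans (h' Z hZ)⟩

/-- The number of equivalence classes of `∼_U` on the subsets of `U`. -/
noncomputable def numClasses (S : SetSystem α) (U : Finset α) : ℕ :=
  Nat.card (Quotient (S.eqvSetoid U))

end SetSystem

/-- A decomposition of a finite ground set `E`: a subcubic tree (every vertex has degree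
one or three) together with a bijection from `E` to the set of leaves (degree-one vertices). -/
structure Decomp (α : Type) (E : Finset α) where
  V : Type
  [fintypeV : Fintype V]
  [decEqV : DecidableEq V]
  G : SimpleGraph V
  [decAdj : DecidableRel G.Adj]
  isTree : G.IsTree
  subcubic : ∀ v : V, G.degree v = 1 ∨ G.degree v = 3
  leaf : α → V
  leaf_degree : ∀ a ∈ E, G.degree (leaf a) = 1
  leaf_injOn : Set.InjOn leaf ↑E
  leaf_surj : ∀ v : V, G.degree v = 1 → ∃ a ∈ E, leaf a = v

namespace Decomp

attribute [instance] fintypeV decEqV decAdj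

variable {α : Type} {E : Finset α}

/-- The set `U ⊆ E` is displayed by an edge `uv` of the decomposition: it consists of those
elements of `E` whose leaf lies in the component of `T − uv` containing `u`. -/
def Displays (D : Decomp α E) (U : Finset α) : Prop :=
  U ⊆ E ∧ ∃ u v : D.V, D.G.Adj u v ∧
    ∀ a ∈ E, (a ∈ U ↔ (D.G.deleteEdges {s(u, v)}).Reachable (D.leaf a) u)

end Decomp

namespace SetSystem

variable {α : Type}

/-- The decomposition-width of a set-system: the least `k` such that some decomposition has
all displayed sets `U` with at most `k` equivalence classes under `∼_U`. -/
noncomputable def dw (S : SetSystem α) : ℕ :=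
  sInf {k : ℕ | ∃ D : Decomp α S.E, ∀ U : Finset α, D.Displays U → S.numClasses U ≤ k}

end SetSystem

namespace Matroid

variable {α : Type}

/-- The set-system of independent sets of a matroid on a finite type. -/
noncomputable def toSetSystem [Fintype α] (M : Matroid α) : SetSystem α where
  E := M.E.toFinite.toFinset
  Ind := {X : Finset α | M.Indep ↑X}
  ind_subset := fun _X hX _a ha =>
    (Set.Finite.mem_toFinset _).2 (hX.subset_ground (Finset.mem_coe.2 ha))

/-- The decomposition-width of a matroid. -/
noncomputable def dw [Fintype α] (M : Matroid α) : ℕ := M.toSetSystem.dw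

/-- The rank of a set in a matroid: the largest size of an independent subset. -/
noncomputable def rank [Fintype α] (M : Matroid α) (U : Set α) : ℕ :=
  sSup {n : ℕ | ∃ X : Finset α, ↑X ⊆ U ∧ M.Indep ↑X ∧ X.card = n}

/-- The connectivity function `λ_M(U) = r(U) + r(E − U) − r(M)`. -/
noncomputable def lambda [Fintype α] (M : Matroid α) (U : Set α) : ℕ :=
  M.rank U + M.rank (M.E \ U) - M.rank M.E

/-- The branch-width of a matroid: the least `k` such that some decomposition of the ground
set has `λ_M(U) + 1 ≤ k` for every displayed set `U`. -/
noncomputable def bw [Fintype α] (M : Matroid α) : ℕ :=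
  sInf {k : ℕ | ∃ D : Decomp α M.toSetSystem.E,
    ∀ U : Finset α, D.Displays U → M.lambda ↑U + 1 ≤ k}

/-- Deletion of a set of elements from a matroid. -/
def del (M : Matroid α) (D : Set α) : Matroid α := M ↾ (M.E \ D)

/-- Contraction of a set of elements in a matroid, defined via duality. -/
def con (M : Matroid α) (C : Set α) : Matroid α := (M✶ ↾ (M.E \ C))✶

/-- `N` is a minor of `M`: `N` is obtained from `M` by contractions and deletions. -/
def IsMinorOf (N M : Matroid α) : Prop :=
  ∃ C D : Set α, C ⊆ M.E ∧ D ⊆ M.E ∧ Disjoint C D ∧ N = (M.con C).del D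

/-- A pigeonhole class of matroids: every subclass of bounded branch-width has bounded
decomposition-width. -/
def PigeonholeClass [Fintype α] (𝓜 : Set (Matroid α)) : Prop :=
  ∀ lam : ℕ, 0 < lam → ∃ ρ : ℕ, ∀ M ∈ 𝓜, M.bw ≤ lam → M.dw ≤ ρ

end Matroid

/-- A `Σ`-tree: a finite full binary tree with `Γ`-labelled vertices. -/
inductive STree (Γ : Type) : Type
  | leaf : Γ → STree Γ
  | node : Γ → STree Γ → STree Γ → STree Γ

/-- A tree automaton with alphabet `Γ`, state set `Q`, accepting states `accept`, and
(partial) transition rules `δ0` and `δ2`. -/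
structure TreeAut (Γ : Type) (Q : Type) where
  accept : Finset Q
  δ0 : Γ → Option (Finset Q)
  δ2 : Γ → Q → Q → Option (Finset Q)

namespace STree

variable {Γ : Type}

/-- The number of leaves of a tree. -/
def leafCount : STree Γ → ℕ
  | .leaf _ => 1
  | .node _ l r => l.leafCount + r.leafCount

/-- `Subtree s t` means `s` is the subtree of `t` rooted at one of the vertices of `t`. -/
inductive Subtree : STree Γ → STree Γ → Prop
  | refl (t : STree Γ) : Subtree t t
  | left {s l r : STree Γ} {a : Γ} : Subtree s l → Subtree s (.node a l r)
  | right {s l r : STree Γ} {a : Γ} : Subtree s r → Subtree s (.node a l r)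

/-- Relabel the vertices of a tree: each leaf label is transformed by `f` applied to its
left-to-right index (offset by the second argument), internal labels by `g`. -/
def relabel {Γ' : Type} (f : ℕ → Γ → Γ') (g : Γ → Γ') : STree Γ → ℕ → STree Γ'
  | .leaf a, k => .leaf (f k a)
  | .node a l r, k => .node (g a) (l.relabel f g k) (r.relabel f g (k + l.leafCount))

end STree

namespace TreeAut

variable {Γ Q : Type}

/-- The run of a tree automaton on a `Σ`-tree, computed bottom-up: a leaf receives
`δ0` of its label, an internal vertex the union of `δ2` over pairs of states at its
children (the empty set if any needed transition is undefined). -/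
noncomputable def run (A : TreeAut Γ Q) : STree Γ → Finset Q
  | .leaf a => (A.δ0 a).getD ∅
  | .node a l r =>
      if ∀ qL ∈ A.run l, ∀ qR ∈ A.run r, (A.δ2 a qL qR).isSome then
        (A.run l).biUnion fun qL => (A.run r).biUnion fun qR => (A.δ2 a qL qR).getD ∅
      else ∅

/-- The automaton accepts a tree if the set of states assigned to the root contains an
accepting state. -/
def Accepts (A : TreeAut Γ Q) (t : STree Γ) : Prop :=
  ∃ q ∈ A.run t, q ∈ A.accept

/-- A deterministic automaton: every image of `δ0` and `δ2` is a singleton. -/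
def Deterministic (A : TreeAut Γ Q) : Prop :=
  (∀ a s, A.δ0 a = some s → s.card = 1) ∧
    (∀ a q₁ q₂ s, A.δ2 a q₁ q₂ = some s → s.card = 1)

end TreeAut

/-- The alphabet `Σ ∪ Σ × {0,1}^I`. -/
abbrev EncAlph (Γ : Type) (I : Finset ℕ) : Type := Γ ⊕ Γ × ({j // j ∈ I} → Bool)

/-- `enc(T, σ, φ, {Y_j}_{j ∈ I})`: relabel each leaf `v` of the tree with `(σ(v), s)`, where
`s(j) = 1` iff `φ⁻¹(v) ∈ Y_j`; internal vertices keep their labels. -/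
noncomputable def enc {α Γ : Type} (E : Finset α) (t : STree Γ)
    (φ : {a // a ∈ E} ≃ Fin t.leafCount) (I : Finset ℕ)
    (Y : {j // j ∈ I} → Finset α) : STree (EncAlph Γ I) :=
  t.relabel
    (fun k a => Sum.inr (a, fun j =>
      if h : k < t.leafCount then
        decide ((φ.symm ⟨k, h⟩ : {a // a ∈ E}).1 ∈ Y j) else false))
    Sum.inl 0

/-- An `I`-ary automaton: `δ0` is defined only on leaf labels from `Σ × {0,1}^I`. -/
def TreeAut.IsIary {Γ Q : Type} (I : Finset ℕ) (A : TreeAut (EncAlph Γ I) Q) : Prop :=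
  ∀ a : Γ, A.δ0 (Sum.inl a) = none

/-- The set-system `M(A, T, σ, φ)` determined by an `{i}`-ary automaton `A` and a parse
tree: a subset `Y ⊆ E` is independent iff `A` accepts `enc(T, σ, φ, {Y})`. -/
noncomputable def systemOf {α Γ Q : Type} (i : ℕ) (A : TreeAut (EncAlph Γ {i}) Q)
    (E : Finset α) (t : STree Γ) (φ : {a // a ∈ E} ≃ Fin t.leafCount) : SetSystem α where
  E := E
  Ind := {Y : Finset α | Y ⊆ E ∧ A.Accepts (enc E t φ {i} fun _ => Y)}
  ind_subset := fun _ hY => hY.1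

/-- A class of set-systems is automatic: there is a single `{i}`-ary tree automaton which
recognises independence in every member, via a suitable parse tree for each member. -/
def Automatic {α : Type} (𝓜 : Set (SetSystem α)) : Prop :=
  ∃ (Γ : Type) (_ : Fintype Γ) (Q : Type) (_ : Fintype Q) (i : ℕ)
    (A : TreeAut (EncAlph Γ {i}) Q), A.IsIary {i} ∧
      ∀ S ∈ 𝓜, ∃ (t : STree Γ) (φ : {a // a ∈ S.E} ≃ Fin t.leafCount),
        S = systemOf i A S.E t φ

/-- Formulas of counting monadic second-order logic `CMS₀`, with set variables `X_n`:
atomic formulas `Ind(X_i)`, `X_i ⊆ X_j` and `|X_i|_{p,q}`, closed under `¬`, `∧`, `∃`. -/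
inductive CMS0 : Type
  | ind : ℕ → CMS0
  | subset : ℕ → ℕ → CMS0
  | card : ℕ → ℕ → ℕ → CMS0
  | not : CMS0 → CMS0
  | and : CMS0 → CMS0 → CMS0
  | ex : ℕ → CMS0 → CMS0

namespace CMS0

/-- The free variables of a `CMS₀` formula. -/
def free : CMS0 → Finset ℕ
  | .ind i => {i}
  | .subset i j => {i, j}
  | .card i _ _ => {i}
  | .not φ => φ.free
  | .and φ ψ => φ.free ∪ ψ.free
  | .ex i φ => φ.free.erase i

/-- Satisfaction of a `CMS₀` formula by a set-system under an interpretation `θ` assigning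
subsets of the ground set to variables. -/
def Sat {α : Type} (S : SetSystem α) (θ : ℕ → Finset α) : CMS0 → Prop
  | .ind i => θ i ∈ S.Ind
  | .subset i j => θ i ⊆ θ j
  | .card i p q => (θ i).card % q = p
  | .not φ => ¬ Sat S θ φ
  | .and φ ψ => Sat S θ φ ∧ Sat S θ ψ
  | .ex i φ => ∃ Y : Finset α, Y ⊆ S.E ∧ Sat S (Function.update θ i Y) φ

end CMS0

theorem Set.exists_pair_eq_of_mem {α : Type} {x y z : α} (h : z = x ∨ z = y) :
    ∃ w, ({z, w} : Set α) = {x, y} := by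
  rcases h with rfl | rfl
  exacts [⟨y, rfl⟩, ⟨x, Set.pair_comm _ _⟩]

instance Finset.finite_subtype_subset {α : Type} (U : Finset α) :
    Finite {X : Finset α // X ⊆ U} :=
  Finite.of_injective (fun X => (⟨X.1, Finset.mem_powerset.2 X.2⟩ : U.powerset))
    fun _ _ h => Subtype.ext (congrArg Subtype.val h :)

namespace SetSystem

variable {α : Type}

theorem card_le_numClasses {ι : Type} (S : SetSystem α) {U : Finset α} (X : ι → Finset α)
    (hXU : ∀ i, X i ⊆ U) (hX : Pairwise fun i j => ¬ S.Eqv U (X i) (X j)) :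
    Nat.card ι ≤ S.numClasses U :=
  Nat.card_le_card_of_injective (fun i => Quotient.mk (S.eqvSetoid U) ⟨X i, hXU i⟩)
    fun _ _ h => by_contra fun hij => hX hij (Quotient.exact h)

end SetSystem

namespace Matroid

variable {α : Type}

theorem ne_of_mem_of_mem_parallel_pairs {ι : Type} {M : Matroid α} {a b : ι → α}
    (hpair : ∀ i, ¬ M.Indep {a i, b i})
    (hfree : ∀ i j, i ≠ j → ∀ x ∈ ({a i, b i} : Set α), ∀ y ∈ ({a j, b j} : Set α),
      M.Indep {x, y})
    {i j : ι} (hij : i ≠ j) {x y : α} (hx : x ∈ ({a i, b i} : Set α))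
    (hy : y ∈ ({a j, b j} : Set α)) : x ≠ y := by
  -- a common element would make the partner of `x` in its own pair independent of `x`
  rintro rfl
  rcases hx with rfl | rfl
  · exact hpair i (Set.pair_comm (b i) (a i) ▸ hfree i j hij (b i) (by simp) (a i) hy)
  · exact hpair i (hfree i j hij (a i) (by simp) (b i) hy)

theorem notMem_range_of_pair_eq {ι : Type} {M : Matroid α} {a b c d : ι → α}
    (hpair : ∀ i, ¬ M.Indep {a i, b i})
    (hfree : ∀ i j, i ≠ j → ∀ x ∈ ({a i, b i} : Set α), ∀ y ∈ ({a j, b j} : Set α),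
      M.Indep {x, y})
    (hab : ∀ i, a i ≠ b i) (hcd : ∀ i, ({c i, d i} : Set α) = {a i, b i}) (i : ι) :
    d i ∉ Set.range c := by
  rintro ⟨j, hj⟩
  obtain rfl | hji := eq_or_ne j i
  · have hsame := hcd j
    rw [hj, Set.pair_eq_pair_iff] at hsame
    rcases hsame with ⟨h₁, h₂⟩ | ⟨h₁, h₂⟩
    · exact hab j (h₁.symm.trans h₂)
    · exact hab j (h₂.symm.trans h₁)
  · exact ne_of_mem_of_mem_parallel_pairs hpair hfree hji (hcd j ▸ by simp)
      (hcd i ▸ by simp) hj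

variable [Fintype α] (M : Matroid α)

theorem bddAbove_indep_card (W : Set α) :
    BddAbove {n : ℕ | ∃ X : Finset α, ↑X ⊆ W ∧ M.Indep ↑X ∧ X.card = n} :=
  ⟨Fintype.card α, by rintro n ⟨X, -, -, rfl⟩; exact X.card_le_univ⟩

theorem card_le_rank {W : Set α} {X : Finset α} (hXW : ↑X ⊆ W) (hX : M.Indep ↑X) :
    X.card ≤ M.rank W :=
  le_csSup (M.bddAbove_indep_card W) ⟨X, hXW, hX, rfl⟩

theorem rank_le_rank_ground (W : Set α) : M.rank W ≤ M.rank M.E :=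
  csSup_le ⟨0, ∅, by simp, by simp, rfl⟩ fun _ ⟨X, _, hX, hcard⟩ =>
    hcard ▸ M.card_le_rank hX.subset_ground hX

theorem rank_eq_two_of_indep_pair {M : Matroid α} (hrank : M.rank M.E = 2) {W : Set α}
    {x y : α} (hx : x ∈ W) (hy : y ∈ W) (hxy : x ≠ y) (hind : M.Indep {x, y}) :
    M.rank W = 2 := by
  refine le_antisymm (hrank ▸ M.rank_le_rank_ground W) ?_
  simpa [Finset.card_pair hxy] using
    M.card_le_rank (X := {x, y}) (by simp [Set.insert_subset_iff, hx, hy]) (by simpa using hind)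

theorem not_eqv_singleton {M : Matroid α} {U : Finset α} {x y z : α} (hzU : z ∉ U)
    (hxz : ¬ M.Indep {x, z}) (hyz : M.Indep {y, z}) :
    ¬ M.toSetSystem.Eqv U {x} {y} := by
  intro h
  have hz : {z} ⊆ M.toSetSystem.E \ U := by
    rw [Finset.singleton_subset_iff, Finset.mem_sdiff, toSetSystem, Set.Finite.mem_toFinset]
    exact ⟨hyz.subset_ground (by simp), hzU⟩
  have hcoe (w : α) : (↑({w} ∪ {z} : Finset α) : Set α) = {w, z} := by
    rw [← Finset.insert_eq, Finset.coe_insert, Finset.coe_singleton]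
  have hyz' : M.Indep ↑({y} ∪ {z} : Finset α) := by rwa [hcoe]
  have hxz' : M.Indep ↑({x} ∪ {z} : Finset α) := (h {z} hz).2 hyz'
  exact hxz (by rwa [hcoe] at hxz')

end Matroid

theorem statement_19_general {α : Type} [Fintype α] (t : ℕ) (ht : 2 ≤ t)
    (M : Matroid α) (a b : Fin t → α)
    (hab : ∀ i j : Fin t, a i ≠ b j)
    (hrank : M.rank M.E = 2)
    (hpair : ∀ i : Fin t, ¬ M.Indep {a i, b i})
    (hfree : ∀ i j : Fin t, i ≠ j → ∀ x ∈ ({a i, b i} : Set α),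
      ∀ y ∈ ({a j, b j} : Set α), M.Indep {x, y})
    (c : Fin t → α) (hc : ∀ i : Fin t, c i = a i ∨ c i = b i)
    (U : Finset α) (hU : ↑U = Set.range c) :
    M.lambda ↑U = 2 ∧ t ≤ M.toSetSystem.numClasses U := by
  choose d hcd using fun i => Set.exists_pair_eq_of_mem (hc i)
  have hc_mem i : c i ∈ ({a i, b i} : Set α) := hcd i ▸ by simp
  have hd_mem i : d i ∈ ({a i, b i} : Set α) := hcd i ▸ by simp
  have hne := @Matroid.ne_of_mem_of_mem_parallel_pairs _ _ M a b hpair hfree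
  have hdU i : d i ∉ U := by
    rw [← Finset.mem_coe, hU]
    exact Matroid.notMem_range_of_pair_eq hpair hfree (fun i => hab i i) hcd i
  obtain ⟨i₀, i₁, hi⟩ := (Fin.nontrivial_iff_two_le.2 ht).exists_pair_ne
  have hd_indep := hfree i₀ i₁ hi _ (hd_mem i₀) _ (hd_mem i₁)
  have hrankU : M.rank U = 2 :=
    Matroid.rank_eq_two_of_indep_pair hrank (by simp [hU]) (by simp [hU])
      (hne hi (hc_mem i₀) (hc_mem i₁)) (hfree i₀ i₁ hi _ (hc_mem i₀) _ (hc_mem i₁))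
  have hrankUc : M.rank (M.E \ U) = 2 :=
    Matroid.rank_eq_two_of_indep_pair hrank ⟨hd_indep.subset_ground (by simp), hdU i₀⟩
      ⟨hd_indep.subset_ground (by simp), hdU i₁⟩ (hne hi (hd_mem i₀) (hd_mem i₁)) hd_indep
  refine ⟨by rw [Matroid.lambda, hrankU, hrankUc, hrank], ?_⟩
  simpa using M.toSetSystem.card_le_numClasses (fun i => {c i})
    (fun i => by simp [← Finset.mem_coe, hU])
    fun i j hij => Matroid.not_eqv_singleton (hdU i) (by rw [hcd i]; exact hpair i)
      (hfree j i hij.symm _ (hc_mem j) _ (hd_mem i))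

/-- Remark `effect`: for the rank-two matroid consisting of `t ≥ 2`
parallel pairs `{a i, b i}`, and `U` a transversal picking exactly one element `c i` from
each pair, we have `λ_M(U) = 2` while `∼_U` has at least `t` equivalence classes; hence
the class of rank-two matroids is not strongly pigeonhole. -/
theorem statement_19 {α : Type} [Fintype α] (t : ℕ) (ht : 2 ≤ t)
    (M : Matroid α) (a b : Fin t → α)
    (ha : Function.Injective a) (hb : Function.Injective b)
    (hab : ∀ i j : Fin t, a i ≠ b j)
    (hE : M.E = Set.range a ∪ Set.range b)
    (hrank : M.rank M.E = 2)
    (hpair : ∀ i : Fin t, ¬ M.Indep {a i, b i})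
    (hnonloop : ∀ i : Fin t, M.Indep {a i} ∧ M.Indep {b i})
    (hfree : ∀ i j : Fin t, i ≠ j → ∀ x ∈ ({a i, b i} : Set α),
      ∀ y ∈ ({a j, b j} : Set α), M.Indep {x, y})
    (c : Fin t → α) (hc : ∀ i : Fin t, c i = a i ∨ c i = b i)
    (U : Finset α) (hU : ↑U = Set.range c) :
    M.lambda ↑U = 2 ∧ t ≤ M.toSetSystem.numClasses U :=
  statement_19_general t ht M a b hab hrank hpair hfree c hc U hU
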